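/- Let u∈C²(ℝ²×[0,T)) satisfy ‖u‖_{2,T}<∞. Then there exists a constant C₃>0, independent of u and T, such that |x|^{1/2}|u(x,t)| ≤ C₃‖u(t)‖₂ for all (x,t)∈ℝ²×[0,T). -/

import Mathlib

open Real MeasureTheory Filter
open scoped ENNReal

noncomputable section

/-- A space-time point `p = (x₁, x₂, t)`. -/
abbrev Pt : Type := ℝ × ℝ × ℝ

def dir3 : Fin 3 → Pt
  | 0 => (0, 0, 1)
  | 1 => (1, 0, 0)
  | 2 => (0, 1, 0)

/-- Partial derivative: `pd 0` is `∂_t`, `pd 1` is `∂_{x₁}`, `pd 2` is `∂_{x₂}`. -/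
def pd (α : Fin 3) (v : Pt → ℝ) : Pt → ℝ := fun p => fderiv ℝ v p (dir3 α)

/-- The vector fields `Γ₀ = ∂_t, Γ₁ = ∂₁, Γ₂ = ∂₂, Γ₃ = Ω = x₁∂₂ − x₂∂₁,
`Γ₄ = S = t∂_t + x₁∂₁ + x₂∂₂`. -/
def Gam : Fin 5 → (Pt → ℝ) → (Pt → ℝ)
  | 0 => pd 0
  | 1 => pd 1
  | 2 => pd 2
  | 3 => fun v p => p.1 * pd 2 v p - p.2.1 * pd 1 v p
  | 4 => fun v p => p.2.2 * pd 0 v p + p.1 * pd 1 v p + p.2.1 * pd 2 v p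

/-- The monomial `Γ^a = Γ₀^{a₀}Γ₁^{a₁}Γ₂^{a₂}Γ₃^{a₃}Γ₄^{a₄}`. -/
def GamPow (a : Fin 5 → ℕ) (v : Pt → ℝ) : Pt → ℝ :=
  (Gam 0)^[a 0] ((Gam 1)^[a 1] ((Gam 2)^[a 2] ((Gam 3)^[a 3] ((Gam 4)^[a 4] v))))

/-- Multi-indices `a` of length 5 with `|a| ≤ k`. -/
def MIdx (k : ℕ) : Finset (Fin 5 → ℕ) :=
  (Finset.range (k + 1)).biUnion fun n => Finset.Nat.antidiagonalTuple 5 n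

/-- The pointwise norm `|v(x,t)|_k = Σ_{|a| ≤ k} |Γ^a v(x,t)|`. -/
def ptNorm (k : ℕ) (v : Pt → ℝ) (p : Pt) : ℝ := ∑ a ∈ MIdx k, |GamPow a v p|

/-- `|x|`, the euclidean norm of the spatial part. -/
def rad (p : Pt) : ℝ := Real.sqrt (p.1 ^ 2 + p.2.1 ^ 2)

/-- The good derivative `Z_α^i = c_i ∂_α + (x_α/|x|) ∂_t` (for `α = 1, 2`). -/
def Zd (ci : ℝ) (α : Fin 3) (v : Pt → ℝ) (p : Pt) : ℝ :=
  ci * pd α v p + ((if α = 1 then p.1 else p.2.1) / rad p) * pd 0 v p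

/-- `|Z^i v| = |Z₁^i v| + |Z₂^i v|`. -/
def Znorm (ci : ℝ) (v : Pt → ℝ) (p : Pt) : ℝ := |Zd ci 1 v p| + |Zd ci 2 v p|

/-- The weighted `L²` norm `‖u(t)‖_k = Σ_{|a|≤k} (∫_{ℝ²} |Γ^a u(x,t)|² dx)^{1/2}`,
valued in `ℝ≥0∞`. -/
def l2Norm (k : ℕ) (u : Pt → ℝ) (t : ℝ) : ℝ≥0∞ :=
  ∑ a ∈ MIdx k,
    (∫⁻ x : ℝ × ℝ, ENNReal.ofReal ((GamPow a u (x.1, x.2, t)) ^ 2)) ^ ((1:ℝ) / 2)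

/-!
Only the spatial slice `v = u(·, t)` matters: it is a `C²` function on the plane, and the seven
fields `1, ∂₁, ∂₂, ∂₁∂₂, Ω, ∂₁Ω, ∂₂Ω` are among the `Γ^a` with `|a| ≤ 2`, so it suffices to prove
`|x| v(x)² ≤ 4 Σ_Z ‖Z v‖²_{L²}` over these fields, which gives `C = 6 ≥ √28`.

Everything comes from the fundamental theorem of calculus along a ray, run towards infinity,
where a square integrable function is small somewhere. For `|x| ≤ 1`, integrating `∂₂(v²)` along
a vertical ray bounds `v(x)²` by the integral of `v² + (∂₂v)²` over the vertical line, and moving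
the line horizontally changes that integral by at most `∫ |∂₁(v² + (∂₂v)²)|`. For `|x| ≥ 1` use
polar coordinates `W(r, θ) = v(r cos θ, r sin θ)`: integrating `∂_r(r W²)` bounds `r W²` by the
radial integral of `r (2W² + (∂_r W)²)`, which varies in `θ` by an integral involving
`∂_θ W = Ω v` and `∂_θ ∂_r W = ∂_r Ω v`, and at some angle is at most its mean. The weight `r`
is the polar Jacobian, so all these terms are plain `L²` norms on the plane.
-/

open Set
open scoped Interval

section Lintegral

variable {α : Type*} [MeasurableSpace α] {μ : Measure α} {s : Set α}

theorem le_of_forall_le_add_of_setLIntegral_ne_top (hsm : MeasurableSet s) (hs : μ s = ⊤)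
    {h : α → ℝ≥0∞} (hh : ∫⁻ c in s, h c ∂μ ≠ ⊤) {x K : ℝ≥0∞} (hx : ∀ c ∈ s, x ≤ h c + K) :
    x ≤ K := by
  refine ENNReal.le_of_forall_pos_le_add fun ε hε _ => ?_
  obtain ⟨c, hc, hc_le⟩ : ∃ c ∈ s, h c ≤ ε := by
    by_contra! hlarge
    refine hh (top_le_iff.mp ?_)
    calc ⊤ = ∫⁻ _ in s, (ε : ℝ≥0∞) ∂μ := by
          rw [setLIntegral_const, hs, ENNReal.mul_top (ENNReal.coe_ne_zero.mpr hε.ne')]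
      _ ≤ ∫⁻ c in s, h c ∂μ := setLIntegral_mono' hsm fun c hc => (hlarge c hc).le
  calc x ≤ h c + K := hx c hc
    _ ≤ ε + K := add_le_add_left hc_le K
    _ = K + ε := add_comm _ _

theorem le_setLIntegral_add_of_forall_le_add (hs : 1 ≤ μ s) (hs' : μ s ≠ ⊤) {h : α → ℝ≥0∞}
    (hh : AEMeasurable h (μ.restrict s)) {x K : ℝ≥0∞} (hx : ∀ c ∈ s, x ≤ h c + K) :
    x ≤ (∫⁻ c in s, h c ∂μ) + K := by
  obtain ⟨c, hc, hc_le⟩ := exists_le_setLAverage (zero_lt_one.trans_le hs).ne' hs' hh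
  have havg : ⨍⁻ c in s, h c ∂μ ≤ ∫⁻ c in s, h c ∂μ := by
    rw [setLAverage_eq]
    exact ENNReal.div_le_of_le_mul (le_mul_of_one_le_right' hs)
  exact (hx c hc).trans (add_le_add_left (hc_le.trans havg) K)

theorem lintegral_ofReal_const_mul {c : ℝ} (hc : 0 ≤ c) (f : α → ℝ) :
    ∫⁻ x, ENNReal.ofReal (c * f x) ∂μ = ENNReal.ofReal c * ∫⁻ x, ENNReal.ofReal (f x) ∂μ := by
  simp_rw [ENNReal.ofReal_mul hc]
  exact lintegral_const_mul' _ _ ENNReal.ofReal_ne_top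

end Lintegral

section OneDimensional

variable {f f' : ℝ → ℝ}

theorem ofReal_le_add_setLIntegral_uIoc_abs_deriv (hf : ∀ s, HasDerivAt f (f' s) s)
    (hf' : Continuous f') (a b : ℝ) :
    ENNReal.ofReal (f b) ≤ ENNReal.ofReal (f a) + ∫⁻ s in Ι a b, ENNReal.ofReal |f' s| := by
  have hint : IntegrableOn (fun s => |f' s|) (Ι a b) := hf'.abs.integrableOn_uIoc
  have hftc : f b - f a ≤ ∫ s in Ι a b, |f' s| := by
    rw [← intervalIntegral.integral_eq_sub_of_hasDerivAt (fun x _ => hf x)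
      (hf'.intervalIntegrable a b)]
    exact (le_abs_self _).trans (by
      simpa using intervalIntegral.norm_integral_le_integral_norm_uIoc (f := f') (μ := volume))
  calc ENNReal.ofReal (f b) ≤ ENNReal.ofReal (f a + ∫ s in Ι a b, |f' s|) :=
        ENNReal.ofReal_le_ofReal (by linarith)
    _ ≤ ENNReal.ofReal (f a) + ENNReal.ofReal (∫ s in Ι a b, |f' s|) := ENNReal.ofReal_add_le
    _ = _ := by
        rw [ofReal_integral_eq_lintegral_ofReal hint (ae_of_all _ fun s => abs_nonneg _)]

theorem ofReal_le_setLIntegral_Ioi_abs_deriv (hf : ∀ s, HasDerivAt f (f' s) s)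
    (hf' : Continuous f') {r : ℝ} (hfin : ∫⁻ s in Ioi r, ENNReal.ofReal (f s) ≠ ⊤) :
    ENNReal.ofReal (f r) ≤ ∫⁻ s in Ioi r, ENNReal.ofReal |f' s| :=
  le_of_forall_le_add_of_setLIntegral_ne_top measurableSet_Ioi volume_Ioi hfin fun y hy =>
    (ofReal_le_add_setLIntegral_uIoc_abs_deriv hf hf' y r).trans <| add_le_add le_rfl
      (lintegral_mono_set ((uIoc_of_ge (le_of_lt hy)).trans_subset Ioc_subset_Ioi_self))

theorem ofReal_mul_sq_le_setLIntegral_Ioi_one (hf : ∀ s, HasDerivAt f (f' s) s)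
    (hf' : Continuous f') {r : ℝ} (hr : 1 ≤ r) :
    ENNReal.ofReal (r * f r ^ 2) ≤
      ∫⁻ s in Ioi 1, ENNReal.ofReal (s * (2 * f s ^ 2 + f' s ^ 2)) := by
  rcases eq_or_ne (∫⁻ s in Ioi 1, ENNReal.ofReal (s * (2 * f s ^ 2 + f' s ^ 2))) ⊤ with htop | htop
  · simp [htop]
  have hfc : Continuous f := continuous_iff_continuousAt.mpr fun s => (hf s).continuousAt
  have hmono : ∫⁻ s in Ioi r, ENNReal.ofReal (s * (2 * f s ^ 2 + f' s ^ 2)) ≤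
      ∫⁻ s in Ioi 1, ENNReal.ofReal (s * (2 * f s ^ 2 + f' s ^ 2)) :=
    lintegral_mono_set (Ioi_subset_Ioi hr)
  have hfin : ∫⁻ s in Ioi r, ENNReal.ofReal (s * f s ^ 2) ≠ ⊤ := by
    refine ne_top_of_le_ne_top htop (le_trans (setLIntegral_mono' measurableSet_Ioi fun s hs => ?_)
      hmono)
    have : 0 ≤ s := by linarith [mem_Ioi.mp hs]
    exact ENNReal.ofReal_le_ofReal (mul_le_mul_of_nonneg_left (by nlinarith) this)
  calc ENNReal.ofReal (r * f r ^ 2)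
      ≤ ∫⁻ s in Ioi r, ENNReal.ofReal |f s ^ 2 + s * (2 * f s * f' s)| :=
        ofReal_le_setLIntegral_Ioi_abs_deriv
          (fun s => ((hasDerivAt_id s).mul ((hf s).pow 2)).congr_deriv (by simp))
          (by fun_prop) hfin
    _ ≤ ∫⁻ s in Ioi r, ENNReal.ofReal (s * (2 * f s ^ 2 + f' s ^ 2)) := by
        refine setLIntegral_mono' measurableSet_Ioi fun s hs => ENNReal.ofReal_le_ofReal ?_
        have : 1 ≤ s := hr.trans (le_of_lt hs)
        rw [abs_le]
        constructor <;> nlinarith [mul_nonneg (zero_le_one.trans this) (sq_nonneg (f s + f' s)),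
          mul_nonneg (zero_le_one.trans this) (sq_nonneg (f s - f' s)),
          mul_nonneg (sub_nonneg.mpr this) (sq_nonneg (f s))]
    _ ≤ _ := hmono

theorem setLIntegral_ofReal_le_add_of_hasDerivAt {g g' : ℝ → ℝ → ℝ} (S : Set ℝ)
    (hg : ∀ s c, HasDerivAt (g s) (g' s c) c) (hg' : ∀ s, Continuous (g' s))
    (hgm : ∀ c, Measurable fun s => g s c) (a b : ℝ) :
    ∫⁻ s in S, ENNReal.ofReal (g s a) ≤
      (∫⁻ s in S, ENNReal.ofReal (g s b)) + ∫⁻ s in S, ∫⁻ c in Ι b a, ENNReal.ofReal |g' s c| :=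
  calc ∫⁻ s in S, ENNReal.ofReal (g s a)
      ≤ ∫⁻ s in S, (ENNReal.ofReal (g s b) + ∫⁻ c in Ι b a, ENNReal.ofReal |g' s c|) :=
        lintegral_mono fun s => ofReal_le_add_setLIntegral_uIoc_abs_deriv (hg s) (hg' s) b a
    _ = _ := lintegral_add_left (hgm b).ennreal_ofReal _

end OneDimensional

section Plane

def dx₁ (v : ℝ × ℝ → ℝ) : ℝ × ℝ → ℝ := fun x => fderiv ℝ v x (1, 0)

def dx₂ (v : ℝ × ℝ → ℝ) : ℝ × ℝ → ℝ := fun x => fderiv ℝ v x (0, 1)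

def rotDeriv (v : ℝ × ℝ → ℝ) : ℝ × ℝ → ℝ := fun x => x.1 * dx₂ v x - x.2 * dx₁ v x

variable {v : ℝ × ℝ → ℝ}

theorem fderiv_apply_eq_dx (x y : ℝ × ℝ) : fderiv ℝ v x y = y.1 * dx₁ v x + y.2 * dx₂ v x := by
  conv_lhs => rw [show y = y.1 • ((1 : ℝ), (0 : ℝ)) + y.2 • ((0 : ℝ), (1 : ℝ)) by ext <;> simp]
  rw [map_add, map_smul, map_smul, smul_eq_mul, smul_eq_mul, dx₁, dx₂]

theorem hasDerivAt_dx₁ {a b : ℝ} (hv : DifferentiableAt ℝ v (a, b)) :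
    HasDerivAt (fun s => v (s, b)) (dx₁ v (a, b)) a :=
  hv.hasFDerivAt.comp_hasDerivAt a ((hasDerivAt_id a).prodMk (hasDerivAt_const a b))

theorem hasDerivAt_dx₂ {a b : ℝ} (hv : DifferentiableAt ℝ v (a, b)) :
    HasDerivAt (fun s => v (a, s)) (dx₂ v (a, b)) b :=
  hv.hasFDerivAt.comp_hasDerivAt b ((hasDerivAt_const b a).prodMk (hasDerivAt_id b))

theorem ContDiff.dx₁ {m n : WithTop ℕ∞} (hv : ContDiff ℝ n v) (hmn : m + 1 ≤ n) :
    ContDiff ℝ m (dx₁ v) :=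
  (hv.fderiv_right hmn).clm_apply contDiff_const

theorem ContDiff.dx₂ {m n : WithTop ℕ∞} (hv : ContDiff ℝ n v) (hmn : m + 1 ≤ n) :
    ContDiff ℝ m (dx₂ v) :=
  (hv.fderiv_right hmn).clm_apply contDiff_const

theorem ContDiff.rotDeriv {m n : WithTop ℕ∞} (hv : ContDiff ℝ n v) (hmn : m + 1 ≤ n) :
    ContDiff ℝ m (rotDeriv v) :=
  (contDiff_fst.mul (hv.dx₂ hmn)).sub (contDiff_snd.mul (hv.dx₁ hmn))

theorem dx₂_dx₁ (hv : ContDiff ℝ 2 v) (x : ℝ × ℝ) : dx₂ (dx₁ v) x = dx₁ (dx₂ v) x := by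
  have hsymm := hv.contDiffAt.isSymmSndFDerivAt (x := x) (by simp)
  have hd : DifferentiableAt ℝ (fderiv ℝ v) x :=
    (hv.fderiv_right (m := 1) le_rfl).differentiable one_ne_zero x
  unfold dx₁ dx₂
  rw [fderiv_clm_apply hd (differentiableAt_const _),
    fderiv_clm_apply hd (differentiableAt_const _)]
  simpa using hsymm (0, 1) (1, 0)

end Plane

section Polar

variable {v : ℝ × ℝ → ℝ}

theorem contDiff_polarCoord_symm {n : WithTop ℕ∞} : ContDiff ℝ n polarCoord.symm := by
  have : (polarCoord.symm : ℝ × ℝ → ℝ × ℝ) = fun q => (q.1 * cos q.2, q.1 * sin q.2) :=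
    funext polarCoord_symm_apply
  rw [this]
  fun_prop

theorem fderiv_comp_polarCoord_symm {q : ℝ × ℝ} (hv : DifferentiableAt ℝ v (polarCoord.symm q))
    (y : ℝ × ℝ) :
    fderiv ℝ (v ∘ polarCoord.symm) q y =
      fderiv ℝ v (polarCoord.symm q) (fderivPolarCoordSymm q y) := by
  rw [fderiv_comp q hv (hasFDerivAt_polarCoord_symm q).differentiableAt,
    (hasFDerivAt_polarCoord_symm q).fderiv]
  rfl

theorem dx₁_comp_polarCoord_symm {q : ℝ × ℝ} (hv : DifferentiableAt ℝ v (polarCoord.symm q)) :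
    dx₁ (v ∘ polarCoord.symm) q =
      cos q.2 * dx₁ v (polarCoord.symm q) + sin q.2 * dx₂ v (polarCoord.symm q) := by
  rw [dx₁, fderiv_comp_polarCoord_symm hv, fderiv_apply_eq_dx]
  simp [fderivPolarCoordSymm]

theorem dx₂_comp_polarCoord_symm {q : ℝ × ℝ} (hv : DifferentiableAt ℝ v (polarCoord.symm q)) :
    dx₂ (v ∘ polarCoord.symm) q = rotDeriv v (polarCoord.symm q) := by
  rw [dx₂, fderiv_comp_polarCoord_symm hv, fderiv_apply_eq_dx, rotDeriv, polarCoord_symm_apply]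
  simp [fderivPolarCoordSymm]
  ring

theorem sq_dx₁_comp_polarCoord_symm_le {q : ℝ × ℝ} (hv : DifferentiableAt ℝ v (polarCoord.symm q)) :
    dx₁ (v ∘ polarCoord.symm) q ^ 2 ≤
      dx₁ v (polarCoord.symm q) ^ 2 + dx₂ v (polarCoord.symm q) ^ 2 := by
  rw [dx₁_comp_polarCoord_symm hv]
  nlinarith [sin_sq_add_cos_sq q.2, sq_nonneg (sin q.2 * dx₁ v (polarCoord.symm q) -
    cos q.2 * dx₂ v (polarCoord.symm q))]

theorem setLIntegral_polarCoord_le {φ ψ : ℝ × ℝ → ℝ}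
    (h : ∀ q ∈ Ioi (1 : ℝ) ×ˢ Ioo (-π) π, φ q ≤ q.1 * ψ (polarCoord.symm q)) :
    ∫⁻ q in Ioi (1 : ℝ) ×ˢ Ioo (-π) π, ENNReal.ofReal (φ q) ≤ ∫⁻ x, ENNReal.ofReal (ψ x) :=
  calc ∫⁻ q in Ioi (1 : ℝ) ×ˢ Ioo (-π) π, ENNReal.ofReal (φ q)
      ≤ ∫⁻ q in Ioi (1 : ℝ) ×ˢ Ioo (-π) π,
          ENNReal.ofReal q.1 • ENNReal.ofReal (ψ (polarCoord.symm q)) :=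
        setLIntegral_mono' (measurableSet_Ioi.prod measurableSet_Ioo) fun q hq => by
          rw [smul_eq_mul, ← ENNReal.ofReal_mul (zero_le_one.trans (le_of_lt hq.1))]
          exact ENNReal.ofReal_le_ofReal (h q hq)
    _ ≤ ∫⁻ q in polarCoord.target, ENNReal.ofReal q.1 • ENNReal.ofReal (ψ (polarCoord.symm q)) :=
        lintegral_mono_set (by
          rw [polarCoord_target]
          exact prod_mono (Ioi_subset_Ioi zero_le_one) le_rfl)
    _ = ∫⁻ x, ENNReal.ofReal (ψ x) := lintegral_comp_polarCoord_symm fun x => ENNReal.ofReal (ψ x)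

theorem exists_polarCoord_symm_eq (x : ℝ × ℝ) :
    ∃ θ ∈ Icc (-π) π, polarCoord.symm (√(x.1 ^ 2 + x.2 ^ 2), θ) = x := by
  set z : ℂ := x.1 + x.2 * Complex.I
  have hz : √(x.1 ^ 2 + x.2 ^ 2) = ‖z‖ := by rw [Complex.norm_def, Complex.normSq_add_mul_I]
  refine ⟨Complex.arg z, ⟨(Complex.neg_pi_lt_arg z).le, Complex.arg_le_pi z⟩, ?_⟩
  rw [polarCoord_symm_apply, hz, Complex.norm_mul_cos_arg, Complex.norm_mul_sin_arg]
  simp [z]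

end Polar

section Strip

variable {F : ℝ × ℝ → ℝ} {a b : ℝ}

theorem setLIntegral_Ioi_one_le_add_of_mem_Icc (hF : ContDiff ℝ 2 F) {θ θ' : ℝ}
    (hθ : θ ∈ Icc a b) (hθ' : θ' ∈ Icc a b) :
    ∫⁻ s in Ioi 1, ENNReal.ofReal (s * (2 * F (s, θ) ^ 2 + dx₁ F (s, θ) ^ 2)) ≤
      (∫⁻ s in Ioi 1, ENNReal.ofReal (s * (2 * F (s, θ') ^ 2 + dx₁ F (s, θ') ^ 2))) +
        ∫⁻ q in Ioi (1 : ℝ) ×ˢ Ioo a b, ENNReal.ofReal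
          (q.1 * (2 * F q ^ 2 + 2 * dx₂ F q ^ 2 + dx₁ F q ^ 2 + dx₂ (dx₁ F) q ^ 2)) := by
  have hF₁ : Differentiable ℝ F := hF.differentiable two_ne_zero
  have hF₂ : Differentiable ℝ (dx₁ F) := (hF.dx₁ le_rfl).differentiable one_ne_zero
  have := hF.continuous
  have := hF₂.continuous
  have := (hF.dx₂ (m := 0) (by norm_num)).continuous
  have := ((hF.dx₁ le_rfl).dx₂ (m := 0) le_rfl).continuous
  set g' : ℝ → ℝ → ℝ := fun s c =>
    s * (4 * F (s, c) * dx₂ F (s, c) + 2 * dx₁ F (s, c) * dx₂ (dx₁ F) (s, c))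
  set k : ℝ × ℝ → ℝ := fun q =>
    q.1 * (2 * F q ^ 2 + 2 * dx₂ F q ^ 2 + dx₁ F q ^ 2 + dx₂ (dx₁ F) q ^ 2)
  have hg : ∀ s c, HasDerivAt (fun c => s * (2 * F (s, c) ^ 2 + dx₁ F (s, c) ^ 2)) (g' s c) c :=
    fun s c => ((((hasDerivAt_dx₂ (hF₁ (s, c))).pow 2).const_mul 2).add
      ((hasDerivAt_dx₂ (hF₂ (s, c))).pow 2)).const_mul s |>.congr_deriv (by ring)
  have hg'_le : ∀ s > 1, ∀ c, |g' s c| ≤ k (s, c) := fun s hs c => by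
    simp only [g', k, abs_mul, abs_of_pos (zero_lt_one.trans hs)]
    refine mul_le_mul_of_nonneg_left (abs_le.mpr ⟨?_, ?_⟩) (by linarith) <;>
      nlinarith [sq_nonneg (F (s, c) + dx₂ F (s, c)), sq_nonneg (F (s, c) - dx₂ F (s, c)),
        sq_nonneg (dx₁ F (s, c) + dx₂ (dx₁ F) (s, c)),
        sq_nonneg (dx₁ F (s, c) - dx₂ (dx₁ F) (s, c))]
  calc _ ≤ _ + ∫⁻ s in Ioi 1, ∫⁻ c in Ι θ' θ, ENNReal.ofReal |g' s c| :=
        setLIntegral_ofReal_le_add_of_hasDerivAt _ hg (fun s => by fun_prop)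
          (fun c => by fun_prop) θ θ'
    _ ≤ _ + ∫⁻ s in Ioi 1, ∫⁻ c in Ioo a b, ENNReal.ofReal (k (s, c)) := by
        refine add_le_add le_rfl (setLIntegral_mono' measurableSet_Ioi fun s hs => ?_)
        rw [setLIntegral_congr Ioo_ae_eq_Icc]
        exact (lintegral_mono_set (uIoc_subset_uIcc.trans (uIcc_subset_Icc hθ' hθ))).trans
          (lintegral_mono fun c => ENNReal.ofReal_le_ofReal (hg'_le s hs c))
    _ = _ := by
        rw [Measure.volume_eq_prod, ← Measure.prod_restrict, lintegral_prod _ (by fun_prop)]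

theorem setLIntegral_Ioi_one_le_of_strip (hF : ContDiff ℝ 2 F) (hab : 1 ≤ b - a) {θ : ℝ}
    (hθ : θ ∈ Icc a b) :
    ∫⁻ s in Ioi 1, ENNReal.ofReal (s * (2 * F (s, θ) ^ 2 + dx₁ F (s, θ) ^ 2)) ≤
      (∫⁻ q in Ioi (1 : ℝ) ×ˢ Ioo a b, ENNReal.ofReal (q.1 * (2 * F q ^ 2 + dx₁ F q ^ 2))) +
        ∫⁻ q in Ioi (1 : ℝ) ×ˢ Ioo a b, ENNReal.ofReal
          (q.1 * (2 * F q ^ 2 + 2 * dx₂ F q ^ 2 + dx₁ F q ^ 2 + dx₂ (dx₁ F) q ^ 2)) := by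
  have := hF.continuous
  have := (hF.dx₁ (m := 0) (by norm_num)).continuous
  have hvol : volume (Ioo a b) = ENNReal.ofReal (b - a) := Real.volume_Ioo
  calc _ ≤ (∫⁻ c in Ioo a b, ∫⁻ s in Ioi 1,
          ENNReal.ofReal (s * (2 * F (s, c) ^ 2 + dx₁ F (s, c) ^ 2))) + _ :=
        le_setLIntegral_add_of_forall_le_add
          (by rw [hvol, ← ENNReal.ofReal_one]; exact ENNReal.ofReal_le_ofReal hab)
          (by rw [hvol]; exact ENNReal.ofReal_ne_top)
          (Measurable.lintegral_prod_right' (f := fun q : ℝ × ℝ =>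
            ENNReal.ofReal (q.2 * (2 * F (q.2, q.1) ^ 2 + dx₁ F (q.2, q.1) ^ 2)))
            (by fun_prop)).aemeasurable
          fun θ' hθ' => setLIntegral_Ioi_one_le_add_of_mem_Icc hF hθ (Ioo_subset_Icc_self hθ')
    _ = _ := by
        congr 1
        rw [Measure.volume_eq_prod, ← Measure.prod_restrict, lintegral_prod_symm' _ (by fun_prop)]

end Strip

section Sobolev

def sobolevDensity (v : ℝ × ℝ → ℝ) (x : ℝ × ℝ) : ℝ :=
  v x ^ 2 + dx₁ v x ^ 2 + dx₂ v x ^ 2 + dx₁ (dx₂ v) x ^ 2 + rotDeriv v x ^ 2 +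
    dx₁ (rotDeriv v) x ^ 2 + dx₂ (rotDeriv v) x ^ 2

def l2NormSq (f : ℝ × ℝ → ℝ) : ℝ≥0∞ := ∫⁻ x, ENNReal.ofReal (f x ^ 2)

variable {v : ℝ × ℝ → ℝ}

theorem ContDiff.continuous_sobolevDensity (hv : ContDiff ℝ 2 v) :
    Continuous (sobolevDensity v) := by
  have := hv.continuous
  have := (hv.dx₁ (m := 0) (by norm_num)).continuous
  have := (hv.dx₂ (m := 0) (by norm_num)).continuous
  have := ((hv.dx₂ le_rfl).dx₁ (m := 0) le_rfl).continuous
  have := (hv.rotDeriv (m := 0) (by norm_num)).continuous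
  have := ((hv.rotDeriv le_rfl).dx₁ (m := 0) le_rfl).continuous
  have := ((hv.rotDeriv le_rfl).dx₂ (m := 0) le_rfl).continuous
  unfold sobolevDensity
  fun_prop

theorem lintegral_sobolevDensity (hv : ContDiff ℝ 2 v) :
    ∫⁻ x, ENNReal.ofReal (sobolevDensity v x) =
      l2NormSq v + l2NormSq (dx₁ v) + l2NormSq (dx₂ v) + l2NormSq (dx₁ (dx₂ v)) +
        l2NormSq (rotDeriv v) + l2NormSq (dx₁ (rotDeriv v)) + l2NormSq (dx₂ (rotDeriv v)) := by
  have := hv.continuous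
  have := (hv.dx₁ (m := 0) (by norm_num)).continuous
  have := (hv.dx₂ (m := 0) (by norm_num)).continuous
  have := ((hv.dx₂ le_rfl).dx₁ (m := 0) le_rfl).continuous
  have := (hv.rotDeriv (m := 0) (by norm_num)).continuous
  have := ((hv.rotDeriv le_rfl).dx₁ (m := 0) le_rfl).continuous
  have := ((hv.rotDeriv le_rfl).dx₂ (m := 0) le_rfl).continuous
  simp only [sobolevDensity, l2NormSq]
  simp (disch := positivity) only [ENNReal.ofReal_add]
  repeat rw [lintegral_add_right _ (by fun_prop)]

theorem lintegral_sq_add_sq_dx₂_le_add (hv : ContDiff ℝ 2 v) (a b : ℝ) :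
    ∫⁻ s, ENNReal.ofReal (v (a, s) ^ 2 + dx₂ v (a, s) ^ 2) ≤
      (∫⁻ s, ENNReal.ofReal (v (b, s) ^ 2 + dx₂ v (b, s) ^ 2)) +
        ∫⁻ y, ENNReal.ofReal (sobolevDensity v y) := by
  have hv₁ : Differentiable ℝ v := hv.differentiable two_ne_zero
  have hv₂ : Differentiable ℝ (dx₂ v) := (hv.dx₂ le_rfl).differentiable one_ne_zero
  have := hv.continuous
  have := hv₂.continuous
  have := (hv.dx₁ (m := 0) (by norm_num)).continuous
  have := ((hv.dx₂ le_rfl).dx₁ (m := 0) le_rfl).continuous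
  have := hv.continuous_sobolevDensity
  set g' : ℝ → ℝ → ℝ := fun s c =>
    2 * v (c, s) * dx₁ v (c, s) + 2 * dx₂ v (c, s) * dx₁ (dx₂ v) (c, s)
  have hg : ∀ s c, HasDerivAt (fun c => v (c, s) ^ 2 + dx₂ v (c, s) ^ 2) (g' s c) c :=
    fun s c => (((hasDerivAt_dx₁ (hv₁ (c, s))).pow 2).add
      ((hasDerivAt_dx₁ (hv₂ (c, s))).pow 2)).congr_deriv (by ring)
  have hg'_le : ∀ s c, |g' s c| ≤ sobolevDensity v (c, s) := fun s c => by
    simp only [g', sobolevDensity, abs_le]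
    constructor <;> nlinarith [sq_nonneg (v (c, s) + dx₁ v (c, s)),
      sq_nonneg (v (c, s) - dx₁ v (c, s)), sq_nonneg (dx₂ v (c, s) + dx₁ (dx₂ v) (c, s)),
      sq_nonneg (dx₂ v (c, s) - dx₁ (dx₂ v) (c, s))]
  calc _ ≤ _ + ∫⁻ s, ∫⁻ c in Ι b a, ENNReal.ofReal |g' s c| := by
        simpa only [Measure.restrict_univ] using setLIntegral_ofReal_le_add_of_hasDerivAt univ
          hg (fun s => by fun_prop) (fun c => by fun_prop) a b
    _ ≤ _ + ∫⁻ s, ∫⁻ c, ENNReal.ofReal (sobolevDensity v (c, s)) :=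
        add_le_add le_rfl (lintegral_mono fun s => (setLIntegral_le_lintegral _ _).trans
          (lintegral_mono fun c => ENNReal.ofReal_le_ofReal (hg'_le s c)))
    _ = _ := by rw [Measure.volume_eq_prod, lintegral_prod_symm' _ (by fun_prop)]

theorem lintegral_sq_add_sq_dx₂_le (hv : ContDiff ℝ 2 v) (a : ℝ) :
    ∫⁻ s, ENNReal.ofReal (v (a, s) ^ 2 + dx₂ v (a, s) ^ 2) ≤
      ∫⁻ y, ENNReal.ofReal (sobolevDensity v y) := by
  rcases eq_or_ne (∫⁻ y, ENNReal.ofReal (sobolevDensity v y)) ⊤ with htop | htop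
  · simp [htop]
  have := hv.continuous
  have := (hv.dx₂ (m := 0) (by norm_num)).continuous
  have hint : ∫⁻ c, ∫⁻ s, ENNReal.ofReal (v (c, s) ^ 2 + dx₂ v (c, s) ^ 2) ≠ ⊤ := by
    refine ne_top_of_le_ne_top htop ?_
    rw [← lintegral_prod (fun y => ENNReal.ofReal (v y ^ 2 + dx₂ v y ^ 2)) (by fun_prop),
      ← Measure.volume_eq_prod]
    exact lintegral_mono fun y => ENNReal.ofReal_le_ofReal (by unfold sobolevDensity; nlinarith)
  exact le_of_forall_le_add_of_setLIntegral_ne_top MeasurableSet.univ volume_univ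
    (by rwa [Measure.restrict_univ]) fun b _ => lintegral_sq_add_sq_dx₂_le_add hv a b

theorem sq_le_lintegral_sobolevDensity (hv : ContDiff ℝ 2 v) (x : ℝ × ℝ) :
    ENNReal.ofReal (v x ^ 2) ≤ ∫⁻ y, ENNReal.ofReal (sobolevDensity v y) := by
  obtain ⟨a, b⟩ := x
  have hfiber := lintegral_sq_add_sq_dx₂_le hv a
  rcases eq_or_ne (∫⁻ y, ENNReal.ofReal (sobolevDensity v y)) ⊤ with htop | htop
  · simp [htop]
  have hv₁ : Differentiable ℝ v := hv.differentiable two_ne_zero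
  have := hv.continuous
  have := (hv.dx₂ (m := 0) (by norm_num)).continuous
  have hfin : ∫⁻ s in Ioi b, ENNReal.ofReal (v (a, s) ^ 2) ≠ ⊤ := by
    refine ne_top_of_le_ne_top htop (le_trans ?_ hfiber)
    exact (setLIntegral_le_lintegral _ _).trans
      (lintegral_mono fun s => ENNReal.ofReal_le_ofReal (by nlinarith))
  calc ENNReal.ofReal (v (a, b) ^ 2)
      ≤ ∫⁻ s in Ioi b, ENNReal.ofReal |2 * v (a, s) * dx₂ v (a, s)| :=
        ofReal_le_setLIntegral_Ioi_abs_deriv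
          (fun s => ((hasDerivAt_dx₂ (hv₁ (a, s))).pow 2).congr_deriv (by ring))
          (by fun_prop) hfin
    _ ≤ ∫⁻ s, ENNReal.ofReal (v (a, s) ^ 2 + dx₂ v (a, s) ^ 2) :=
        (setLIntegral_le_lintegral _ _).trans (lintegral_mono fun s =>
          ENNReal.ofReal_le_ofReal (abs_le.mpr ⟨by nlinarith [sq_nonneg (v (a, s) + dx₂ v (a, s))],
            by nlinarith [sq_nonneg (v (a, s) - dx₂ v (a, s))]⟩))
    _ ≤ _ := hfiber

theorem polar_terms_le_two_mul_sobolevDensity (hv : ContDiff ℝ 2 v) (q : ℝ × ℝ) :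
    2 * (v ∘ polarCoord.symm) q ^ 2 + 2 * dx₂ (v ∘ polarCoord.symm) q ^ 2 +
        dx₁ (v ∘ polarCoord.symm) q ^ 2 + dx₂ (dx₁ (v ∘ polarCoord.symm)) q ^ 2 ≤
      2 * sobolevDensity v (polarCoord.symm q) := by
  have hv₁ : Differentiable ℝ v := hv.differentiable two_ne_zero
  have hrot : Differentiable ℝ (rotDeriv v) := (hv.rotDeriv le_rfl).differentiable one_ne_zero
  have hdx₂ : dx₂ (v ∘ polarCoord.symm) = rotDeriv v ∘ polarCoord.symm :=
    funext fun q => dx₂_comp_polarCoord_symm (hv₁ _)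
  have h₁ := sq_dx₁_comp_polarCoord_symm_le (hv₁ (polarCoord.symm q))
  have h₂ := sq_dx₁_comp_polarCoord_symm_le (hrot (polarCoord.symm q))
  -- with `W = v ∘ polarCoord.symm`: `∂_θ ∂_r W = ∂_r ∂_θ W = ∂_r (Ω v)`
  rw [dx₂_dx₁ (hv.comp contDiff_polarCoord_symm), hdx₂]
  simp only [sobolevDensity, Function.comp_apply] at h₁ h₂ ⊢
  nlinarith

theorem sqrt_mul_sq_le_of_one_le (hv : ContDiff ℝ 2 v) {x : ℝ × ℝ} (hx : 1 ≤ x.1 ^ 2 + x.2 ^ 2) :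
    ENNReal.ofReal (√(x.1 ^ 2 + x.2 ^ 2) * v x ^ 2) ≤
      4 * ∫⁻ y, ENNReal.ofReal (sobolevDensity v y) := by
  set W := v ∘ polarCoord.symm
  have hW : ContDiff ℝ 2 W := hv.comp contDiff_polarCoord_symm
  have hbound := polar_terms_le_two_mul_sobolevDensity hv
  have hq₁ : ∀ q ∈ Ioi (1 : ℝ) ×ˢ Ioo (-π) π, q.1 * (2 * W q ^ 2 + dx₁ W q ^ 2) ≤
      q.1 * (2 * sobolevDensity v (polarCoord.symm q)) := fun q hq => by
    refine mul_le_mul_of_nonneg_left ?_ (zero_le_one.trans (le_of_lt hq.1))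
    nlinarith [hbound q, sq_nonneg (dx₂ W q), sq_nonneg (dx₂ (dx₁ W) q)]
  have hq₂ : ∀ q ∈ Ioi (1 : ℝ) ×ˢ Ioo (-π) π,
      q.1 * (2 * W q ^ 2 + 2 * dx₂ W q ^ 2 + dx₁ W q ^ 2 + dx₂ (dx₁ W) q ^ 2) ≤
        q.1 * (2 * sobolevDensity v (polarCoord.symm q)) := fun q hq =>
    mul_le_mul_of_nonneg_left (hbound q) (zero_le_one.trans (le_of_lt hq.1))
  obtain ⟨θ, hθ, hx_eq⟩ := exists_polarCoord_symm_eq x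
  have hρ : 1 ≤ √(x.1 ^ 2 + x.2 ^ 2) := Real.one_le_sqrt.mpr hx
  calc ENNReal.ofReal (√(x.1 ^ 2 + x.2 ^ 2) * v x ^ 2)
      = ENNReal.ofReal (√(x.1 ^ 2 + x.2 ^ 2) * W (√(x.1 ^ 2 + x.2 ^ 2), θ) ^ 2) := by
        rw [show W _ = v _ from rfl, hx_eq]
    _ ≤ ∫⁻ s in Ioi 1, ENNReal.ofReal (s * (2 * W (s, θ) ^ 2 + dx₁ W (s, θ) ^ 2)) :=
        ofReal_mul_sq_le_setLIntegral_Ioi_one (fun s => hasDerivAt_dx₁ (hW.differentiable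
          two_ne_zero _)) ((hW.dx₁ (m := 0) (by norm_num)).continuous.comp (by fun_prop)) hρ
    _ ≤ _ := setLIntegral_Ioi_one_le_of_strip hW (by linarith [pi_gt_three]) hθ
    _ ≤ (∫⁻ y, ENNReal.ofReal (2 * sobolevDensity v y)) +
          ∫⁻ y, ENNReal.ofReal (2 * sobolevDensity v y) :=
        add_le_add (setLIntegral_polarCoord_le hq₁) (setLIntegral_polarCoord_le hq₂)
    _ = 4 * ∫⁻ y, ENNReal.ofReal (sobolevDensity v y) := by
        rw [lintegral_ofReal_const_mul zero_le_two, ENNReal.ofReal_ofNat, ← two_mul, ← mul_assoc]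
        norm_num

theorem sqrt_mul_sq_le_lintegral_sobolevDensity (hv : ContDiff ℝ 2 v) (x : ℝ × ℝ) :
    ENNReal.ofReal (√(x.1 ^ 2 + x.2 ^ 2) * v x ^ 2) ≤
      4 * ∫⁻ y, ENNReal.ofReal (sobolevDensity v y) := by
  by_cases hx : 1 ≤ x.1 ^ 2 + x.2 ^ 2
  · exact sqrt_mul_sq_le_of_one_le hv hx
  calc ENNReal.ofReal (√(x.1 ^ 2 + x.2 ^ 2) * v x ^ 2) ≤ ENNReal.ofReal (v x ^ 2) :=
        ENNReal.ofReal_le_ofReal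
          (mul_le_of_le_one_left (sq_nonneg _) (Real.sqrt_le_one.mpr (not_le.mp hx).le))
    _ ≤ ∫⁻ y, ENNReal.ofReal (sobolevDensity v y) := sq_le_lintegral_sobolevDensity hv x
    _ ≤ 4 * ∫⁻ y, ENNReal.ofReal (sobolevDensity v y) := le_mul_of_one_le_left' (by norm_num)

end Sobolev

section Slice

def sliceAt (t : ℝ) (f : Pt → ℝ) : ℝ × ℝ → ℝ := fun x => f (x.1, x.2, t)

variable {f u : Pt → ℝ} {T t : ℝ}

theorem fderiv_sliceAt {x : ℝ × ℝ} (hf : DifferentiableAt ℝ f (x.1, x.2, t)) (y : ℝ × ℝ) :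
    fderiv ℝ (sliceAt t f) x y = fderiv ℝ f (x.1, x.2, t) (y.1, y.2, 0) := by
  have he : HasFDerivAt (fun z : ℝ × ℝ => ((z.1, z.2, t) : Pt))
      ((ContinuousLinearMap.fst ℝ ℝ ℝ).prod ((ContinuousLinearMap.snd ℝ ℝ ℝ).prod 0)) x :=
    hasFDerivAt_fst.prodMk (hasFDerivAt_snd.prodMk (hasFDerivAt_const t x))
  change fderiv ℝ (f ∘ fun z : ℝ × ℝ => ((z.1, z.2, t) : Pt)) x y = _
  rw [(hf.hasFDerivAt.comp x he).fderiv]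
  rfl

theorem dx₁_sliceAt (hf : ∀ x : ℝ × ℝ, DifferentiableAt ℝ f (x.1, x.2, t)) :
    dx₁ (sliceAt t f) = sliceAt t (pd 1 f) :=
  funext fun x => fderiv_sliceAt (hf x) _

theorem dx₂_sliceAt (hf : ∀ x : ℝ × ℝ, DifferentiableAt ℝ f (x.1, x.2, t)) :
    dx₂ (sliceAt t f) = sliceAt t (pd 2 f) :=
  funext fun x => fderiv_sliceAt (hf x) _

theorem rotDeriv_sliceAt (hf : ∀ x : ℝ × ℝ, DifferentiableAt ℝ f (x.1, x.2, t)) :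
    rotDeriv (sliceAt t f) = sliceAt t (Gam 3 f) := by
  ext x
  simp only [rotDeriv, dx₁_sliceAt hf, dx₂_sliceAt hf]
  rfl

theorem isOpen_setOf_lt_time (T : ℝ) : IsOpen {p : Pt | p.2.2 < T} :=
  isOpen_lt (by fun_prop) continuous_const

theorem ContDiffOn.differentiableAt_sliceAt (hf : ContDiffOn ℝ 1 f {p : Pt | p.2.2 < T})
    (ht : t < T) (x : ℝ × ℝ) : DifferentiableAt ℝ f (x.1, x.2, t) :=
  (hf.contDiffAt ((isOpen_setOf_lt_time T).mem_nhds ht)).differentiableAt one_ne_zero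

theorem ContDiffOn.pd (hu : ContDiffOn ℝ 2 u {p : Pt | p.2.2 < T}) (α : Fin 3) :
    ContDiffOn ℝ 1 (pd α u) {p : Pt | p.2.2 < T} :=
  (hu.fderiv_of_isOpen (isOpen_setOf_lt_time T) le_rfl).clm_apply contDiffOn_const

theorem ContDiffOn.gam_three (hu : ContDiffOn ℝ 2 u {p : Pt | p.2.2 < T}) :
    ContDiffOn ℝ 1 (Gam 3 u) {p : Pt | p.2.2 < T} :=
  (contDiffOn_fst.mul (hu.pd 2)).sub ((contDiff_fst.comp contDiff_snd).contDiffOn.mul (hu.pd 1))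

theorem contDiff_sliceAt (hu : ContDiffOn ℝ 2 u {p : Pt | p.2.2 < T}) (ht : t < T) :
    ContDiff ℝ 2 (sliceAt t u) :=
  hu.comp_contDiff (by fun_prop) fun _ => ht

theorem l2NormSq_sliceAt_gamPow_le {a : Fin 5 → ℕ} (ha : a ∈ MIdx 2) :
    l2NormSq (sliceAt t (GamPow a u)) ≤ l2Norm 2 u t ^ 2 := by
  have hterm := Finset.single_le_sum (f := fun a =>
    (∫⁻ x : ℝ × ℝ, ENNReal.ofReal ((GamPow a u (x.1, x.2, t)) ^ 2)) ^ ((1 : ℝ) / 2))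
    (fun _ _ => zero_le) ha
  calc l2NormSq (sliceAt t (GamPow a u))
      = ((∫⁻ x : ℝ × ℝ, ENNReal.ofReal ((GamPow a u (x.1, x.2, t)) ^ 2)) ^ ((1 : ℝ) / 2)) ^ 2 := by
        rw [← ENNReal.rpow_mul_natCast]
        norm_num [l2NormSq, sliceAt]
    _ ≤ l2Norm 2 u t ^ 2 := by gcongr; exact hterm

theorem lintegral_sobolevDensity_sliceAt_le (hu : ContDiffOn ℝ 2 u {p : Pt | p.2.2 < T})
    (ht : t < T) :
    ∫⁻ x, ENNReal.ofReal (sobolevDensity (sliceAt t u) x) ≤ 7 * l2Norm 2 u t ^ 2 := by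
  have hu₁ := (hu.of_le one_le_two).differentiableAt_sliceAt ht
  have hrot := hu.gam_three.differentiableAt_sliceAt ht
  rw [lintegral_sobolevDensity (contDiff_sliceAt hu ht), dx₁_sliceAt hu₁, dx₂_sliceAt hu₁,
    dx₁_sliceAt ((hu.pd 2).differentiableAt_sliceAt ht), rotDeriv_sliceAt hu₁,
    dx₁_sliceAt hrot, dx₂_sliceAt hrot]
  set N := l2Norm 2 u t
  calc _ ≤ N ^ 2 + N ^ 2 + N ^ 2 + N ^ 2 + N ^ 2 + N ^ 2 + N ^ 2 := by
        gcongr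
        · exact l2NormSq_sliceAt_gamPow_le (a := ![0, 0, 0, 0, 0]) (by decide)
        · exact l2NormSq_sliceAt_gamPow_le (a := ![0, 1, 0, 0, 0]) (by decide)
        · exact l2NormSq_sliceAt_gamPow_le (a := ![0, 0, 1, 0, 0]) (by decide)
        · exact l2NormSq_sliceAt_gamPow_le (a := ![0, 1, 1, 0, 0]) (by decide)
        · exact l2NormSq_sliceAt_gamPow_le (a := ![0, 0, 0, 1, 0]) (by decide)
        · exact l2NormSq_sliceAt_gamPow_le (a := ![0, 1, 0, 1, 0]) (by decide)
        · exact l2NormSq_sliceAt_gamPow_le (a := ![0, 0, 1, 1, 0]) (by decide)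
    _ = 7 * N ^ 2 := by ring

end Slice

/-- Klainerman-type weighted Sobolev inequality:
if `u ∈ C²(ℝ²×[0,T))` and `‖u‖_{2,T} < ∞`, then
`|x|^{1/2}|u(x,t)| ≤ C₃ ‖u(t)‖₂`, with `C₃` independent of `u` and `T`. -/
theorem stmt13 :
    ∃ C : ℝ, 0 < C ∧ ∀ T : ℝ, 0 < T → ∀ u : Pt → ℝ,
      ContDiffOn ℝ 2 u {p : Pt | p.2.2 < T} →
      (⨆ (t : ℝ) (_ : 0 ≤ t ∧ t < T), l2Norm 2 u t) < ⊤ →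
      ∀ p : Pt, 0 ≤ p.2.2 → p.2.2 < T →
        ENNReal.ofReal (Real.sqrt (rad p) * |u p|)
          ≤ ENNReal.ofReal C * l2Norm 2 u p.2.2 := by
  refine ⟨6, by norm_num, fun T _ u hu _ p _ hpT => ?_⟩
  obtain ⟨x₁, x₂, t⟩ := p
  set N := l2Norm 2 u t
  have hweighted : ENNReal.ofReal (rad (x₁, x₂, t) * u (x₁, x₂, t) ^ 2) ≤ 4 * (7 * N ^ 2) :=
    (sqrt_mul_sq_le_lintegral_sobolevDensity (contDiff_sliceAt hu hpT) (x₁, x₂)).trans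
      (by gcongr; exact lintegral_sobolevDensity_sliceAt_le hu hpT)
  have hrad : 0 ≤ rad (x₁, x₂, t) := Real.sqrt_nonneg _
  rw [← ENNReal.pow_le_pow_left_iff two_ne_zero, ← ENNReal.ofReal_pow (by positivity), mul_pow,
    Real.sq_sqrt hrad, sq_abs, mul_pow, ENNReal.ofReal_ofNat]
  calc ENNReal.ofReal (rad (x₁, x₂, t) * u (x₁, x₂, t) ^ 2) ≤ 4 * (7 * N ^ 2) := hweighted
    _ ≤ 6 ^ 2 * N ^ 2 := by rw [← mul_assoc]; gcongr; norm_num
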